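/- There exists an arithmetic sequence (a_n) that is not b-bounded but such that t^s_{(a_n)}(T) = t^s_{(d_n)}(T), where (d_n) is the associated non-arithmetic sequence. -/

import Mathlib

open Filter Topology

/-- Number of elements of `A` below `n`. -/
noncomputable def densCount (A : Set ℕ) (n : ℕ) : ℕ := Nat.card ↥(A ∩ Set.Iio n)

/-- `A ⊆ ℕ` has natural density `δ`. -/
def HasDensity (A : Set ℕ) (δ : ℝ) : Prop :=
  Tendsto (fun n => (densCount A n : ℝ) / n) atTop (𝓝 δ)

/-- Upper natural density of `A ⊆ ℕ`. -/
noncomputable def upperDensity (A : Set ℕ) : ℝ :=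
  Filter.limsup (fun n => (densCount A n : ℝ) / n) atTop

/-- A sequence in the circle `ℝ/ℤ` converges statistically to `0`. -/
def StatTendstoZero (x : ℕ → AddCircle (1:ℝ)) : Prop :=
  ∀ ε : ℝ, 0 < ε → HasDensity {n | ε ≤ ‖x n‖} 0

/-- The statistically characterized subset `t^s_{(a_n)}(𝕋)`. -/
def sChar (a : ℕ → ℤ) : Set (AddCircle (1:ℝ)) :=
  {x | StatTendstoZero (fun n => a n • x)}

/-- The characterized subset `t_{(a_n)}(𝕋)`. -/
def charSet (a : ℕ → ℤ) : Set (AddCircle (1:ℝ)) :=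
  {x | Tendsto (fun n => a n • x) atTop (𝓝 0)}

/-- `(a_n)` is an arithmetic sequence. -/
def IsArithSeq (a : ℕ → ℕ) : Prop :=
  a 0 = 1 ∧ StrictMono a ∧ ∀ n, a n ∣ a (n + 1)

/-- `d` is the increasing enumeration of `{r·a_k : 1 ≤ r < b_{k+1}}`. -/
def IsDSeq (a d : ℕ → ℕ) : Prop :=
  StrictMono d ∧
    Set.range d = {m : ℕ | ∃ k r : ℕ, 1 ≤ r ∧ r < a (k + 1) / a k ∧ m = r * a k}

/-!
Take `a_n = b_1 ⋯ b_n` with `b_{k+1} = 2 + (G (k+1) - G k)` and `G n = 2 ^ ⌊log₄ n⌋ ≈ √n`.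
At `k = 4^(t+1) - 1` the ratio jumps to `2 + 2^t`, so `(b_n)` is unbounded, while
`∑_{k<n} (b_{k+1} - 2) = G n - 1 = O(√n)`. Each block `[a_k, a_{k+1})` contains exactly
`b_{k+1} - 1` terms of `d`, so `a_n = d_{i_n}` with `i_n = n + G n - 1 ∼ n`: `(a_n)` is a
subsequence of `(d_n)` along a set of indices of density one, and along such a subsequence
statistical convergence to `0` is preserved in both directions.
-/

open Finset

lemma densCount_eq_card (A : Set ℕ) [DecidablePred (· ∈ A)] (n : ℕ) :
    densCount A n = #{m ∈ range n | m ∈ A} := by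
  rw [densCount, Nat.card_coe_set_eq, ← Set.ncard_coe_finset]
  congr 1
  ext m
  simp [and_comm]

lemma densCount_mono (A : Set ℕ) : Monotone (densCount A) := by
  classical
  intro m n hmn
  simp only [densCount_eq_card]
  exact card_le_card (filter_subset_filter _ (range_subset_range.mpr hmn))

section StrictMonoReindex

variable {i : ℕ → ℕ}

lemma densCount_preimage_le (hi : StrictMono i) (B : Set ℕ) (n : ℕ) :
    densCount (i ⁻¹' B) n ≤ densCount B (i n) := by
  classical
  simp only [densCount_eq_card]
  refine card_le_card_of_injOn i (fun k hk => ?_) hi.injective.injOn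
  simp only [coe_filter, mem_range, Set.mem_preimage, Set.mem_ofPred_eq] at hk
  simpa using ⟨hi hk.1, hk.2⟩

lemma densCount_le_preimage_add (hi : StrictMono i) (B : Set ℕ) (n : ℕ) :
    densCount B (i n) ≤ densCount (i ⁻¹' B) n + (i n - n) := by
  classical
  simp only [densCount_eq_card]
  have himage : (range n).image i ⊆ range (i n) := by
    intro m hm
    obtain ⟨k, hk, rfl⟩ := mem_image.mp hm
    exact mem_range.mpr (hi (mem_range.mp hk))
  have hcover : {m ∈ range (i n) | m ∈ B} ⊆
      {k ∈ range n | k ∈ i ⁻¹' B}.image i ∪ (range (i n) \ (range n).image i) := by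
    intro m hm
    by_cases hmi : m ∈ (range n).image i
    · obtain ⟨k, hk, rfl⟩ := mem_image.mp hmi
      exact mem_union_left _ (mem_image_of_mem i (by simp_all))
    · exact mem_union_right _ (mem_sdiff.mpr ⟨(mem_filter.mp hm).1, hmi⟩)
  calc #{m ∈ range (i n) | m ∈ B}
      ≤ #({k ∈ range n | k ∈ i ⁻¹' B}.image i) + #(range (i n) \ (range n).image i) :=
        (card_le_card hcover).trans (card_union_le _ _)
    _ ≤ #{k ∈ range n | k ∈ i ⁻¹' B} + (i n - n) := by
        rw [card_sdiff_of_subset himage, card_image_of_injective (range n) hi.injective, card_range,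
          card_range]
        exact Nat.add_le_add_right card_image_le _

lemma hasDensity_zero_of_preimage (hi : StrictMono i)
    (hlim : Tendsto (fun n => (i n : ℝ) / n) atTop (𝓝 1)) {B : Set ℕ}
    (hpre : HasDensity (i ⁻¹' B) 0) : HasDensity B 0 := by
  have hbound : ∀ᶠ n : ℕ in atTop, (densCount B n : ℝ) / n ≤
      (densCount (i ⁻¹' B) n : ℝ) / n + ((i n : ℝ) / n - 1) := by
    filter_upwards [eventually_gt_atTop 0] with n hn
    have hn' : (0 : ℝ) < n := by exact_mod_cast hn
    have hcount : (densCount B n : ℝ) ≤ densCount (i ⁻¹' B) n + (i n - n) := by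
      have h := (densCount_mono B hi.le_apply).trans (densCount_le_preimage_add hi B n)
      rw [← Nat.cast_sub (hi.le_apply (x := n))]
      exact_mod_cast h
    rw [div_sub_one hn'.ne', ← add_div, div_le_div_iff_of_pos_right hn']
    linarith
  have hlim' := hpre.add (hlim.sub_const 1)
  rw [sub_self, add_zero] at hlim'
  exact squeeze_zero' (Eventually.of_forall fun n => by positivity) hbound hlim'

lemma hasDensity_zero_preimage (hi : StrictMono i)
    (hlim : Tendsto (fun n => (i n : ℝ) / n) atTop (𝓝 1)) {B : Set ℕ}
    (hB : HasDensity B 0) : HasDensity (i ⁻¹' B) 0 := by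
  have hbound : ∀ᶠ n : ℕ in atTop, (densCount (i ⁻¹' B) n : ℝ) / n ≤
      (densCount B (i n) : ℝ) / i n * ((i n : ℝ) / n) := by
    filter_upwards [eventually_gt_atTop 0] with n hn
    have hn' : (0 : ℝ) < n := by exact_mod_cast hn
    have hin : (0 : ℝ) < i n := hn'.trans_le (by exact_mod_cast hi.le_apply)
    rw [div_mul_div_cancel₀ hin.ne', div_le_div_iff_of_pos_right hn']
    exact_mod_cast densCount_preimage_le hi B n
  have hlim' := (hB.comp hi.tendsto_atTop).mul hlim
  rw [zero_mul] at hlim'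
  exact squeeze_zero' (Eventually.of_forall fun n => by positivity) hbound hlim'

theorem hasDensity_zero_preimage_iff (hi : StrictMono i)
    (hlim : Tendsto (fun n => (i n : ℝ) / n) atTop (𝓝 1)) (B : Set ℕ) :
    HasDensity (i ⁻¹' B) 0 ↔ HasDensity B 0 :=
  ⟨hasDensity_zero_of_preimage hi hlim, hasDensity_zero_preimage hi hlim⟩

end StrictMonoReindex

lemma Monotone.eq_of_mem_Ico_succ {a : ℕ → ℕ} (ha : Monotone a) {k l m : ℕ}
    (hk : m ∈ Set.Ico (a k) (a (k + 1))) (hl : m ∈ Set.Ico (a l) (a (l + 1))) : k = l := by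
  by_contra hne
  rcases Nat.lt_or_gt_of_ne hne with h | h
  · exact absurd (hl.1.trans_lt hk.2) (not_lt.mpr (ha h))
  · exact absurd (hk.1.trans_lt hl.2) (not_lt.mpr (ha h))

def dSet (a : ℕ → ℕ) : Set ℕ :=
  {m : ℕ | ∃ k r : ℕ, 1 ≤ r ∧ r < a (k + 1) / a k ∧ m = r * a k}

namespace IsArithSeq

variable {a : ℕ → ℕ}

lemma pos (ha : IsArithSeq a) (k : ℕ) : 0 < a k :=
  (ha.1 ▸ ha.2.1.monotone (Nat.zero_le k) : 1 ≤ a k)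

lemma div_mul_cancel (ha : IsArithSeq a) (k : ℕ) : a (k + 1) / a k * a k = a (k + 1) :=
  Nat.div_mul_cancel (ha.2.2 k)

lemma two_le_div (ha : IsArithSeq a) (k : ℕ) : 2 ≤ a (k + 1) / a k := by
  have h := ha.2.1 (Nat.lt_succ_self k)
  rw [← ha.div_mul_cancel k] at h
  by_contra hlt
  interval_cases hb : a (k + 1) / a k <;> simp_all

lemma mem_dSet (ha : IsArithSeq a) (k : ℕ) : a k ∈ dSet a :=
  ⟨k, 1, le_rfl, ha.two_le_div k, (one_mul _).symm⟩

lemma mul_mem_Ico (ha : IsArithSeq a) {k r : ℕ} (hr : 1 ≤ r) (hrb : r < a (k + 1) / a k) :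
    r * a k ∈ Set.Ico (a k) (a (k + 1)) :=
  ⟨Nat.le_mul_of_pos_left _ hr,
    ha.div_mul_cancel k ▸ Nat.mul_lt_mul_of_pos_right hrb (ha.pos k)⟩

/-- Between `a_k` and `a_{k+1}` the set `dSet a` consists of the `b_{k+1} - 1` multiples of
`a_k`. -/
lemma count_dSet (ha : IsArithSeq a) [DecidablePred (· ∈ dSet a)] (n : ℕ) :
    Nat.count (· ∈ dSet a) (a n) = ∑ k ∈ range n, (a (k + 1) / a k - 1) := by
  have hblocks : {m ∈ range (a n) | m ∈ dSet a} =
      (range n).biUnion fun k => (Ico 1 (a (k + 1) / a k)).image (· * a k) := by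
    ext m
    simp only [mem_filter, mem_range, mem_biUnion, mem_image, mem_Ico]
    constructor
    · rintro ⟨hmn, k, r, hr, hrb, rfl⟩
      have hk : a k < a n := (ha.mul_mem_Ico hr hrb).1.trans_lt hmn
      exact ⟨k, ha.2.1.lt_iff_lt.mp hk, r, ⟨hr, hrb⟩, rfl⟩
    · rintro ⟨k, hk, r, ⟨hr, hrb⟩, rfl⟩
      exact ⟨(ha.mul_mem_Ico hr hrb).2.trans_le (ha.2.1.monotone hk), k, r, hr, hrb, rfl⟩
  rw [Nat.count_eq_card_filter_range, hblocks, card_biUnion]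
  · refine sum_congr rfl fun k _ => ?_
    rw [card_image_of_injective _ (mul_left_injective₀ (ha.pos k).ne'), Nat.card_Ico]
  · intro k _ l _ hkl
    refine disjoint_left.mpr fun m hmk hml => hkl ?_
    obtain ⟨r, hr, rfl⟩ := mem_image.mp hmk
    obtain ⟨s, hs, hsm⟩ := mem_image.mp hml
    rw [mem_Ico] at hr hs
    exact ha.2.1.monotone.eq_of_mem_Ico_succ (ha.mul_mem_Ico hr.1 hr.2)
      (hsm ▸ ha.mul_mem_Ico hs.1 hs.2)

lemma isDSeq_nth (ha : IsArithSeq a) : IsDSeq a (Nat.nth (· ∈ dSet a)) := by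
  have hinf : (dSet a).Infinite := Set.infinite_of_injective_forall_mem ha.2.1.injective ha.mem_dSet
  exact ⟨Nat.nth_strictMono hinf, Nat.range_nth_of_infinite hinf⟩

/-- `a_n = d_{i_n}` with `i_n = n + ∑_{k<n} (b_{k+1} - 2)`, so the hypothesis says that the
indices `i_n` form a set of density one. -/
theorem sChar_eq_sChar_nth (ha : IsArithSeq a)
    (hgap : Tendsto (fun n => ((∑ k ∈ range n, (a (k + 1) / a k - 2) : ℕ) : ℝ) / n)
      atTop (𝓝 0)) :
    sChar (fun n => (a n : ℤ)) = sChar (fun n => (Nat.nth (· ∈ dSet a) n : ℤ)) := by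
  classical
  set i : ℕ → ℕ := fun n => Nat.count (· ∈ dSet a) (a n) with hi_def
  have hi : StrictMono i := fun m n hmn => Nat.count_strict_mono (ha.mem_dSet m) (ha.2.1 hmn)
  have hnth (n : ℕ) : Nat.nth (· ∈ dSet a) (i n) = a n := Nat.nth_count (ha.mem_dSet n)
  have hi_eq (n : ℕ) : i n = n + ∑ k ∈ range n, (a (k + 1) / a k - 2) := by
    have h (k : ℕ) : a (k + 1) / a k - 1 = 1 + (a (k + 1) / a k - 2) := by
      have := ha.two_le_div k; omega
    simp only [hi_def, ha.count_dSet, h, sum_add_distrib, sum_const, card_range, smul_eq_mul,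
      mul_one]
  have hlim : Tendsto (fun n => (i n : ℝ) / n) atTop (𝓝 1) := by
    have h := hgap.const_add 1
    rw [add_zero] at h
    refine h.congr' ?_
    filter_upwards [eventually_gt_atTop 0] with n hn
    rw [hi_eq, Nat.cast_add, add_div, div_self (by positivity)]
  ext x
  simp only [sChar, Set.mem_ofPred_eq, StatTendstoZero]
  refine forall₂_congr fun ε _ => ?_
  have hpre : {n | ε ≤ ‖(a n : ℤ) • x‖} =
      i ⁻¹' {j | ε ≤ ‖(Nat.nth (· ∈ dSet a) j : ℤ) • x‖} := by
    ext n
    simp only [Set.mem_preimage, Set.mem_ofPred_eq, hnth]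
  rw [hpre, hasDensity_zero_preimage_iff hi hlim]

end IsArithSeq

def prodSeq (b : ℕ → ℕ) (n : ℕ) : ℕ := ∏ k ∈ range n, b k

lemma prodSeq_succ (b : ℕ → ℕ) (n : ℕ) : prodSeq b (n + 1) = b n * prodSeq b n := by
  rw [prodSeq, prod_range_succ, mul_comm, prodSeq]

lemma prodSeq_pos {b : ℕ → ℕ} (hb : ∀ k, 0 < b k) (n : ℕ) : 0 < prodSeq b n :=
  prod_pos fun k _ => hb k

lemma prodSeq_succ_div {b : ℕ → ℕ} (hb : ∀ k, 0 < b k) (n : ℕ) :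
    prodSeq b (n + 1) / prodSeq b n = b n := by
  rw [prodSeq_succ, Nat.mul_div_cancel _ (prodSeq_pos hb n)]

lemma isArithSeq_prodSeq {b : ℕ → ℕ} (hb : ∀ k, 2 ≤ b k) : IsArithSeq (prodSeq b) := by
  refine ⟨prod_range_zero b, strictMono_nat_of_lt_succ fun n => ?_, fun n => ?_⟩
  · rw [prodSeq_succ]
    exact lt_mul_left (prodSeq_pos (fun k => (hb k).trans_lt' two_pos) n) (hb n)
  · exact Dvd.intro_left _ (prodSeq_succ b n).symm

def ratioOfGap (G : ℕ → ℕ) (k : ℕ) : ℕ := 2 + (G (k + 1) - G k)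

lemma sum_ratioOfGap_sub_two {G : ℕ → ℕ} (hG : Monotone G) (n : ℕ) :
    ∑ k ∈ range n, (ratioOfGap G k - 2) = G n - G 0 := by
  simp only [ratioOfGap, Nat.add_sub_cancel_left]
  exact sum_range_tsub hG n

/-- The largest power of two not exceeding `√n` (for `n ≠ 0`). -/
def dyadicSqrt (n : ℕ) : ℕ := 2 ^ Nat.log 4 n

lemma dyadicSqrt_monotone : Monotone dyadicSqrt :=
  fun _ _ h => Nat.pow_le_pow_right two_pos (Nat.log_mono_right h)

lemma dyadicSqrt_mul_self_le {n : ℕ} (hn : n ≠ 0) : dyadicSqrt n * dyadicSqrt n ≤ n := by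
  rw [dyadicSqrt, ← mul_pow]
  exact Nat.pow_log_le_self 4 hn

lemma dyadicSqrt_pow_four (t : ℕ) : dyadicSqrt (4 ^ t) = 2 ^ t := by
  rw [dyadicSqrt, Nat.log_pow (by norm_num)]

lemma dyadicSqrt_pow_four_sub_one (t : ℕ) : dyadicSqrt (4 ^ (t + 1) - 1) = 2 ^ t := by
  have hlow : 4 ^ t ≤ 4 ^ (t + 1) - 1 := by
    rw [pow_succ]; have := Nat.one_le_pow t 4 (by norm_num); omega
  rw [dyadicSqrt, Nat.log_eq_of_pow_le_of_lt_pow hlow (Nat.sub_lt (by positivity) one_pos)]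

lemma tendsto_div_of_mul_self_le {f : ℕ → ℕ} (hf : ∀ n, f n * f n ≤ n) :
    Tendsto (fun n => (f n : ℝ) / n) atTop (𝓝 0) := by
  have hsqrt : Tendsto (fun n : ℕ => √(1 / (n : ℝ))) atTop (𝓝 0) := by
    simpa using (tendsto_one_div_atTop_nhds_zero_nat).sqrt
  refine squeeze_zero (fun n => by positivity) (fun n => ?_) hsqrt
  refine Real.le_sqrt_of_sq_le ?_
  rcases Nat.eq_zero_or_pos n with rfl | hn
  · simp
  have hn' : (0 : ℝ) < n := by exact_mod_cast hn
  rw [div_pow, div_le_div_iff₀ (by positivity) hn', one_mul, sq, sq]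
  have : (f n : ℝ) * f n ≤ n := by exact_mod_cast hf n
  nlinarith

theorem ratioOfGap_dyadicSqrt_unbounded :
    ¬ ∃ M : ℕ, ∀ n, ratioOfGap dyadicSqrt n ≤ M := by
  rintro ⟨M, hM⟩
  have h := hM (4 ^ (M + 1) - 1)
  rw [ratioOfGap, Nat.sub_add_cancel (Nat.one_le_pow _ _ (by norm_num)), dyadicSqrt_pow_four,
    dyadicSqrt_pow_four_sub_one, pow_succ] at h
  have := Nat.lt_two_pow_self (n := M)
  omega

theorem tendsto_sum_ratioOfGap_dyadicSqrt :
    Tendsto (fun n => ((∑ k ∈ range n, (ratioOfGap dyadicSqrt k - 2) : ℕ) : ℝ) / n)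
      atTop (𝓝 0) := by
  simp only [sum_ratioOfGap_sub_two dyadicSqrt_monotone]
  refine tendsto_div_of_mul_self_le fun n => ?_
  rcases Nat.eq_zero_or_pos n with rfl | hn
  · simp [dyadicSqrt]
  · exact (Nat.mul_le_mul (Nat.sub_le _ _) (Nat.sub_le _ _)).trans
      (dyadicSqrt_mul_self_le hn.ne')

theorem stmt_10 :
    ∃ a d : ℕ → ℕ, IsArithSeq a ∧ IsDSeq a d ∧
      (¬ ∃ M : ℕ, ∀ n, a (n + 1) / a n ≤ M) ∧
      sChar (fun n => (a n : ℤ)) = sChar (fun n => (d n : ℤ)) := by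
  have hb (k : ℕ) : 2 ≤ ratioOfGap dyadicSqrt k := Nat.le_add_right 2 _
  have hb₀ (k : ℕ) : 0 < ratioOfGap dyadicSqrt k := (hb k).trans_lt' two_pos
  have ha := isArithSeq_prodSeq hb
  refine ⟨prodSeq (ratioOfGap dyadicSqrt), Nat.nth (· ∈ dSet (prodSeq (ratioOfGap dyadicSqrt))),
    ha, ha.isDSeq_nth, ?_, ha.sChar_eq_sChar_nth ?_⟩
  · simpa only [prodSeq_succ_div hb₀] using ratioOfGap_dyadicSqrt_unbounded
  · simpa only [prodSeq_succ_div hb₀] using tendsto_sum_ratioOfGap_dyadicSqrt
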